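/- arXiv:1405.7633 — 2 statements merged into one kernel-verified Lean document; each statement's English description precedes it below -/
import Mathlib

section
/- Let G : ℝ → ℝ be measurable and let α > 0. Assume that the function t ↦ |G(t)|/(e^{αt} − 1) is integrable on (0, ∞). Then ∫₀^∞ e^{−αx} (∑'_{k=1}^∞ G(x/k)/k) dx = ∑'_{k=1}^∞ ∫₀^∞ e^{−αkt} G(t) dt; that is, the Laplace transform at α of the function F(x) = ∑'_{k=1}^∞ G(x/k)/k equals ∑'_{k=1}^∞ g(αk). -/
/-!
Expand `e^{-αx} F(x)` termwise. The substitution `x = (k+1) t` turns the `k`-th term into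
`e^{-α(k+1)t} G(t)`, and summing the geometric series gives
`∑_k e^{-α(k+1)t} |G(t)| = |G(t)| / (e^{αt} - 1)`, which is integrable by hypothesis; this
justifies exchanging the sum and the integral.
-/

open MeasureTheory Real Set

lemma hasSum_exp_neg_mul_succ {a : ℝ} (ha : 0 < a) :
    HasSum (fun n : ℕ => exp (-(a * (n + 1)))) (exp a - 1)⁻¹ := by
  have hr : exp (-a) < 1 := exp_lt_one_iff.mpr (neg_lt_zero.mpr ha)
  have h := (hasSum_geometric_of_lt_one (exp_pos _).le hr).mul_left (exp (-a))
  have hterm (n : ℕ) : exp (-a) * exp (-a) ^ n = exp (-(a * (n + 1))) := by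
    rw [← exp_nat_mul, ← exp_add]
    ring_nf
  have hval : exp (-a) * (1 - exp (-a))⁻¹ = (exp a - 1)⁻¹ := by
    have : 1 < exp a := one_lt_exp_iff.mpr ha
    rw [exp_neg]
    field_simp
  rwa [funext hterm, hval] at h

lemma integral_Ioi_comp_div_div {c : ℝ} (hc : 0 < c) (f : ℝ → ℝ) :
    ∫ x in Ioi 0, f (x / c) / c = ∫ x in Ioi 0, f x := by
  simp_rw [integral_div, div_eq_inv_mul _ c, integral_comp_mul_left_Ioi f 0 (inv_pos.2 hc),
    mul_zero, smul_eq_mul, inv_inv]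
  field_simp

lemma MeasureTheory.IntegrableOn.comp_div_div_Ioi {f : ℝ → ℝ} (hf : IntegrableOn f (Ioi 0))
    {c : ℝ} (hc : 0 < c) : IntegrableOn (fun x => f (x / c) / c) (Ioi 0) := by
  have h : IntegrableOn (fun x => f (c⁻¹ * x)) (Ioi 0) := by
    rwa [integrableOn_Ioi_comp_mul_left_iff f 0 (inv_pos.2 hc), mul_zero]
  simp_rw [← div_eq_inv_mul] at h
  exact h.div_const c

section LaplaceKernel

variable {G : ℝ → ℝ} {α : ℝ}

lemma hasSum_abs_exp_neg_mul_succ_mul (hα : 0 < α) {t : ℝ} (ht : 0 < t) :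
    HasSum (fun k : ℕ => |exp (-(α * (k + 1) * t)) * G t|) (|G t| / (exp (α * t) - 1)) := by
  simp_rw [abs_mul, abs_exp, mul_right_comm α, div_eq_inv_mul]
  exact (hasSum_exp_neg_mul_succ (mul_pos hα ht)).mul_right _

lemma integrableOn_exp_neg_mul_succ_mul (hG : Measurable G) (hα : 0 < α)
    (hint : IntegrableOn (fun t => |G t| / (exp (α * t) - 1)) (Ioi 0)) (k : ℕ) :
    IntegrableOn (fun t => exp (-(α * (k + 1) * t)) * G t) (Ioi 0) := by
  refine hint.mono' (by fun_prop) ?_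
  filter_upwards [ae_restrict_mem measurableSet_Ioi] with t ht
  exact le_hasSum (hasSum_abs_exp_neg_mul_succ_mul hα ht) k fun _ _ => abs_nonneg _

lemma summable_integral_abs_exp_neg_mul_succ_mul (hG : Measurable G) (hα : 0 < α)
    (hint : IntegrableOn (fun t => |G t| / (exp (α * t) - 1)) (Ioi 0)) :
    Summable fun k : ℕ => ∫ t in Ioi 0, |exp (-(α * (k + 1) * t)) * G t| := by
  set φ : ℕ → ℝ → ℝ := fun k t => |exp (-(α * (k + 1) * t)) * G t|
  have hsum : ∀ᵐ t ∂volume.restrict (Ioi 0),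
      HasSum (fun k => φ k t) (|G t| / (exp (α * t) - 1)) := by
    filter_upwards [ae_restrict_mem measurableSet_Ioi] with t ht
    exact hasSum_abs_exp_neg_mul_succ_mul hα ht
  refine (hasSum_integral_of_dominated_convergence φ
    (fun k => (by fun_prop : Measurable (φ k)).aestronglyMeasurable)
    (fun k => ae_of_all _ fun t => (abs_abs _).le) (hsum.mono fun t ht => ht.summable)
    (hint.congr (hsum.mono fun t ht => ht.tsum_eq.symm)) hsum).summable

end LaplaceKernel

/-- The Laplace transform at `α` of `F(x) = ∑_{k≥1} G(x/k)/k` equals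
`∑_{k≥1} g(αk)` where `g` is the Laplace transform of `G`. -/
theorem laplace_of_dilated_sum (G : ℝ → ℝ) (hG : Measurable G) (α : ℝ) (hα : 0 < α)
    (hint : IntegrableOn (fun t => |G t| / (Real.exp (α * t) - 1)) (Ioi 0)) :
    ∫ x in Ioi 0, Real.exp (-(α * x)) * (∑' k : ℕ, G (x / (k + 1)) / (k + 1))
      = ∑' k : ℕ, ∫ t in Ioi 0, Real.exp (-(α * (k + 1) * t)) * G t := by
  set φ : ℕ → ℝ → ℝ := fun k t => exp (-(α * (k + 1) * t)) * G t
  have hc (k : ℕ) : (0 : ℝ) < k + 1 := k.cast_add_one_pos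
  have hdil (x : ℝ) : exp (-(α * x)) * ∑' k : ℕ, G (x / (k + 1)) / (k + 1)
      = ∑' k : ℕ, φ k (x / (k + 1)) / (k + 1) := by
    rw [← tsum_mul_left]
    congr 1 with k
    simp only [φ, mul_assoc α, mul_div_cancel₀ x (hc k).ne', mul_div_assoc]
  have hnorm (k : ℕ) : ∫ x in Ioi 0, ‖φ k (x / (k + 1)) / (k + 1)‖ = ∫ t in Ioi 0, |φ k t| := by
    simp only [norm_eq_abs, abs_div, abs_of_pos (hc k)]
    exact integral_Ioi_comp_div_div (hc k) fun t => |φ k t|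
  simp_rw [hdil]
  rw [← integral_tsum_of_summable_integral_norm
    (fun k => (integrableOn_exp_neg_mul_succ_mul hG hα hint k).comp_div_div_Ioi (hc k))
    ((summable_integral_abs_exp_neg_mul_succ_mul hG hα hint).congr fun k => (hnorm k).symm)]
  exact tsum_congr fun k => integral_Ioi_comp_div_div (hc k) (φ k)
end

section
/- Let G : ℝ → ℝ be measurable and let α > 0. Assume that the function t ↦ |G(t)|/(e^{αt} − 1)² is integrable on (0, ∞). Then the differentiated alternating series ∑'_{k=1}^∞ (−1)^{k+1} k · ∫₀^∞ e^{−α(k+1)t} G(t) dt converges and equals ∫₀^∞ G(t)/(e^{αt} + 1)² dt. -/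
/-!
For `t > 0` put `x = e^{-αt} ∈ (0, 1)`. Differentiating the geometric series gives
`∑_{k ≥ 0} (k + 1) y^{k+2} = y² / (1 - y)²` for `|y| < 1`. At `y = -x` this sums the integrands
of the series to `G(t) / (e^{αt} + 1)²`, and at `y = x` it sums their absolute values to
`|G(t)| / (e^{αt} - 1)²`. The latter is integrable by hypothesis, so dominated convergence lets
the series be integrated term by term.
-/

open MeasureTheory Real Set

theorem hasSum_succ_mul_pow_add_two {𝕜 : Type*} [NormedField 𝕜] [CompleteSpace 𝕜] {x : 𝕜}
    (hx : ‖x‖ < 1) :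
    HasSum (fun k : ℕ => ((k : 𝕜) + 1) * x ^ (k + 2)) (x ^ 2 / (1 - x) ^ 2) := by
  have h := ((hasSum_nat_add_iff' (f := fun n : ℕ => (n : 𝕜) * x ^ n) 1).mpr
    (hasSum_coe_mul_geometric_of_norm_lt_one hx)).mul_left x
  simp only [Finset.sum_range_one, Nat.cast_zero, zero_mul, sub_zero] at h
  rw [show x ^ 2 / (1 - x) ^ 2 = x * (x / (1 - x) ^ 2) by ring]
  exact h.congr_fun fun k => by push_cast; ring

theorem hasSum_succ_mul_exp_neg_mul {s : ℝ} (hs : 0 < s) :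
    HasSum (fun k : ℕ => ((k : ℝ) + 1) * exp (-(s * ((k + 1) + 1)))) ((exp s - 1)⁻¹ ^ 2) := by
  have h := hasSum_succ_mul_pow_add_two (x := exp (-s)) (by simpa using hs)
  rw [show exp (-s) ^ 2 / (1 - exp (-s)) ^ 2 = (exp s - 1)⁻¹ ^ 2 by
    rw [exp_neg]; field_simp] at h
  exact h.congr_fun fun k => by rw [← exp_nat_mul]; push_cast; ring_nf

theorem hasSum_neg_one_pow_mul_succ_mul_exp_neg_mul {s : ℝ} (hs : 0 < s) :
    HasSum (fun k : ℕ => (-1) ^ k * ((k : ℝ) + 1) * exp (-(s * ((k + 1) + 1))))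
      ((exp s + 1)⁻¹ ^ 2) := by
  have h := hasSum_succ_mul_pow_add_two (x := -exp (-s)) (by simpa using hs)
  rw [show (-exp (-s)) ^ 2 / (1 - -exp (-s)) ^ 2 = (exp s + 1)⁻¹ ^ 2 by
    rw [neg_sq, sub_neg_eq_add, exp_neg]; field_simp] at h
  exact h.congr_fun fun k => by rw [neg_pow (exp (-s)), ← exp_nat_mul]; push_cast; ring_nf

theorem hasSum_integral_of_hasSum_norm {α E : Type*} [MeasurableSpace α] {μ : Measure α}
    [NormedAddCommGroup E] [NormedSpace ℝ E] {F : ℕ → α → E} {f : α → E} {g : α → ℝ}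
    (hF_meas : ∀ n, AEStronglyMeasurable (F n) μ)
    (h_norm : ∀ᵐ a ∂μ, HasSum (fun n => ‖F n a‖) (g a)) (hg : Integrable g μ)
    (h_lim : ∀ᵐ a ∂μ, HasSum (fun n => F n a) (f a)) :
    HasSum (fun n => ∫ a, F n a ∂μ) (∫ a, f a ∂μ) :=
  hasSum_integral_of_dominated_convergence (fun n a => ‖F n a‖) hF_meas
    (fun _ => .of_forall fun _ => le_rfl) (h_norm.mono fun _ h => h.summable)
    (hg.congr (h_norm.mono fun _ h => h.tsum_eq.symm)) h_lim

/-- Differentiated alternating series: `∑_{k≥1} (-1)^{k+1} k ∫₀^∞ e^{-α(k+1)t} G(t) dt`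
converges to `∫₀^∞ G(t)/(e^{αt} + 1)² dt`. -/
theorem differentiated_alt_series_eq_integral (G : ℝ → ℝ) (hG : Measurable G) (α : ℝ)
    (hα : 0 < α)
    (hint : IntegrableOn (fun t => |G t| / (Real.exp (α * t) - 1) ^ 2) (Ioi 0)) :
    HasSum (fun k : ℕ =>
        (-1 : ℝ) ^ k * ((k : ℝ) + 1) * ∫ t in Ioi 0, Real.exp (-(α * ((k + 1) + 1) * t)) * G t)
      (∫ t in Ioi 0, G t / (Real.exp (α * t) + 1) ^ 2) := by
  let F (k : ℕ) (t : ℝ) : ℝ := (-1) ^ k * ((k : ℝ) + 1) * (exp (-(α * ((k + 1) + 1) * t)) * G t)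
  have h_norm : ∀ t ∈ Ioi (0 : ℝ), HasSum (fun k => ‖F k t‖) (|G t| / (exp (α * t) - 1) ^ 2) := by
    intro t ht
    rw [div_eq_inv_mul, ← inv_pow]
    refine ((hasSum_succ_mul_exp_neg_mul (mul_pos hα ht)).mul_right |G t|).congr_fun fun k => ?_
    simp [F, mul_right_comm α, abs_of_nonneg (by positivity : (0 : ℝ) ≤ k + 1), mul_assoc]
  have h_lim : ∀ t ∈ Ioi (0 : ℝ), HasSum (fun k => F k t) (G t / (exp (α * t) + 1) ^ 2) := by
    intro t ht
    rw [div_eq_inv_mul, ← inv_pow]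
    refine ((hasSum_neg_one_pow_mul_succ_mul_exp_neg_mul (mul_pos hα ht)).mul_right
      (G t)).congr_fun fun k => ?_
    simp only [F, mul_right_comm α, mul_assoc]
  have h := hasSum_integral_of_hasSum_norm (μ := volume.restrict (Ioi 0))
    (fun k => (by fun_prop : Measurable (F k)).aestronglyMeasurable)
    ((ae_restrict_iff' measurableSet_Ioi).mpr (.of_forall h_norm)) hint
    ((ae_restrict_iff' measurableSet_Ioi).mpr (.of_forall h_lim))
  exact h.congr_fun fun k => (integral_const_mul _ _).symm
end
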